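/- Let Y ~ χ₃ and U₁,…,U_p be i.i.d. Uniform[-1,1], all mutually independent, and set Xᵢ = Y·Uᵢ. Then (X₁,…,X_p) has joint density f_p(x) = (2^{p-1}√(2π))⁻¹ ∫_{‖x‖_∞}^∞ y^{2-p} e^{-y²/2} dy, where ‖x‖_∞ = max_i |xᵢ|. -/

import Mathlib

/-!
Conditionally on `Y = y > 0`, the vector `y • U` is uniform on the cube `[-y, y]^p`, the closed
ball of radius `y` for the sup norm, so it has density `(2y)^{-p}` there. Mixing these densities
against the `χ₃` law of `Y` gives the density
`x ↦ ∫_{y ≥ ‖x‖} √(2/π) y² e^{-y²/2} (2y)^{-p} dy`, and `√(2/π) 2^{-p} = (2^{p-1} √(2π))⁻¹`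
turns it into `f_p`. The only point where the integral may diverge, `x = 0`, is Lebesgue-null.
-/

open MeasureTheory ProbabilityTheory

/-- The chi distribution with 3 degrees of freedom, as a measure on ℝ. -/
noncomputable def chi3 : Measure ℝ :=
  volume.withDensity (fun y =>
    ENNReal.ofReal (if 0 < y then Real.sqrt (2 / Real.pi) * y ^ 2 * Real.exp (-y ^ 2 / 2) else 0))

/-- The uniform distribution on [-1, 1]. -/
noncomputable def unif : Measure ℝ := (2 : ENNReal)⁻¹ • volume.restrict (Set.Icc (-1 : ℝ) 1)

/-- The Khintchine mixture density in `p` dimensions; `‖x‖` on `Fin p → ℝ` is the sup norm. -/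
noncomputable def khintchineDensity (p : ℕ) (x : Fin p → ℝ) : ℝ :=
  ((2 : ℝ) ^ ((p : ℝ) - 1) * Real.sqrt (2 * Real.pi))⁻¹ *
    ∫ y in Set.Ioi ‖x‖, y ^ ((2 : ℝ) - (p : ℝ)) * Real.exp (-y ^ 2 / 2)

open Set
open scoped ENNReal

theorem map_prod_eq_withDensity_lintegral {α β γ : Type*} [MeasurableSpace α]
    [MeasurableSpace β] [MeasurableSpace γ] {μ : Measure α} [SFinite μ] {ν : Measure β} [SFinite ν]
    {ρ : Measure γ} [SFinite ρ] {f : α × β → γ} (hf : Measurable f) {g : α → γ → ℝ≥0∞}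
    (hg : Measurable (Function.uncurry g))
    (h : ∀ᵐ a ∂μ, ν.map (fun b => f (a, b)) = ρ.withDensity (g a)) :
    (μ.prod ν).map f = ρ.withDensity fun c => ∫⁻ a, g a c ∂μ := by
  ext s hs
  rw [Measure.map_apply hf hs, Measure.prod_apply (hf hs), withDensity_apply _ hs,
    ← lintegral_lintegral_swap hg.aemeasurable]
  refine lintegral_congr_ae (h.mono fun a ha => ?_)
  dsimp only
  rw [← withDensity_apply _ hs, ← ha,
    Measure.map_apply (f := fun b => f (a, b)) (hf.comp measurable_prodMk_left) hs]
  rfl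

theorem map_prod_eq_prod_of_iIndepFun_cons {Ω β : Type*} [MeasurableSpace Ω] [MeasurableSpace β]
    {μ : Measure Ω} {n : ℕ} {X : Ω → β} {V : Fin n → Ω → β} (hX : Measurable X)
    (hV : ∀ i, Measurable (V i)) (h : iIndepFun (Fin.cons X V : Fin (n + 1) → Ω → β) μ) :
    μ.map (fun ω => (X ω, fun i => V i ω)) = (μ.map X).prod (Measure.pi fun i => μ.map (V i)) := by
  have := h.isProbabilityMeasure
  have hcons : ∀ j, Measurable ((Fin.cons X V : Fin (n + 1) → Ω → β) j) := Fin.cases hX hV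
  have : ∀ j, IsProbabilityMeasure (μ.map ((Fin.cons X V : Fin (n + 1) → Ω → β) j)) :=
    fun j => Measure.isProbabilityMeasure_map (hcons j).aemeasurable
  let e := MeasurableEquiv.piFinSuccAbove (fun _ : Fin (n + 1) => β) 0
  calc μ.map (fun ω => (X ω, fun i => V i ω))
      = (μ.map fun ω j => ((Fin.cons X V : Fin (n + 1) → Ω → β) j) ω).map e := by
        rw [Measure.map_map e.measurable (measurable_pi_lambda _ hcons)]
        rfl
    _ = (Measure.pi fun j => μ.map ((Fin.cons X V : Fin (n + 1) → Ω → β) j)).map e := by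
        rw [h.map_fun_eq_pi_map fun j => (hcons j).aemeasurable]
    _ = _ := (measurePreserving_piFinSuccAbove _ 0).map_eq

instance : IsProbabilityMeasure unif :=
  ⟨by simp [unif, Real.volume_Icc, one_add_one_eq_two, ENNReal.inv_mul_cancel]⟩

theorem closedBall_zero_one_eq_pi_Icc (p : ℕ) :
    Metric.closedBall (0 : Fin p → ℝ) 1 = univ.pi fun _ => Icc (-1) 1 := by
  rw [closedBall_pi _ zero_le_one]
  norm_num [Real.closedBall_eq_Icc]

theorem pi_unif_eq_smul_restrict (p : ℕ) :
    Measure.pi (fun _ : Fin p => unif) =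
      (2⁻¹ : ℝ≥0∞) ^ p • volume.restrict (Metric.closedBall (0 : Fin p → ℝ) 1) := by
  refine Measure.pi_eq fun s hs => ?_
  rw [closedBall_zero_one_eq_pi_Icc, Measure.smul_apply, Measure.restrict_apply'
    (.univ_pi fun _ => measurableSet_Icc), ← pi_inter_distrib, volume_pi, Measure.pi_pi,
    smul_eq_mul, ← Fin.prod_const, ← Finset.prod_mul_distrib]
  simp only [unif, Measure.smul_apply, Measure.restrict_apply (hs _), smul_eq_mul]

theorem map_smul_restrict_closedBall {E : Type*} [NormedAddCommGroup E] [NormedSpace ℝ E]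
    [MeasurableSpace E] [BorelSpace E] [FiniteDimensional ℝ E] (μ : Measure E)
    [μ.IsAddHaarMeasure] {r : ℝ} (hr : 0 < r) :
    (μ.restrict (Metric.closedBall 0 1)).map (r • ·) =
      ENNReal.ofReal (r ^ Module.finrank ℝ E)⁻¹ • μ.restrict (Metric.closedBall 0 r) := by
  ext s hs
  have hball : (r • ·) ⁻¹' s ∩ Metric.closedBall (0 : E) 1 =
      (r • ·) ⁻¹' (s ∩ Metric.closedBall 0 r) := by
    ext u
    simp [norm_smul, abs_of_pos hr, mul_le_iff_le_one_right hr]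
  rw [Measure.map_apply (measurable_const_smul r) hs,
    Measure.restrict_apply (measurable_const_smul r hs), hball,
    Measure.addHaar_preimage_smul μ hr.ne', Measure.smul_apply, Measure.restrict_apply hs,
    smul_eq_mul, abs_of_pos (by positivity)]

noncomputable def cubeDensity (p : ℕ) (y : ℝ) (x : Fin p → ℝ) : ℝ≥0∞ :=
  if ‖x‖ ≤ y then ENNReal.ofReal ((2 * y) ^ p)⁻¹ else 0

theorem measurable_cubeDensity (p : ℕ) : Measurable (Function.uncurry (cubeDensity p)) :=
  Measurable.ite (measurableSet_le (by fun_prop) (by fun_prop)) (by fun_prop) measurable_const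

theorem map_smul_pi_unif (p : ℕ) {y : ℝ} (hy : 0 < y) :
    (Measure.pi fun _ : Fin p => unif).map (y • ·) = volume.withDensity (cubeDensity p y) := by
  have hcube : cubeDensity p y =
      (Metric.closedBall 0 y).indicator fun _ => ENNReal.ofReal ((2 * y) ^ p)⁻¹ := by
    ext x
    simp [cubeDensity, indicator]
  rw [pi_unif_eq_smul_restrict, Measure.map_smul, map_smul_restrict_closedBall volume hy,
    smul_smul, hcube, withDensity_indicator measurableSet_closedBall, withDensity_const,
    Module.finrank_fin_fun, mul_pow, mul_inv, ENNReal.ofReal_mul (by positivity),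
    ENNReal.ofReal_inv_of_pos (pow_pos two_pos p), ENNReal.ofReal_pow zero_le_two,
    ENNReal.ofReal_ofNat, ENNReal.inv_pow]

noncomputable def chi3Density (y : ℝ) : ℝ :=
  if 0 < y then Real.sqrt (2 / Real.pi) * y ^ 2 * Real.exp (-y ^ 2 / 2) else 0

theorem chi3_eq_withDensity : chi3 = volume.withDensity fun y => ENNReal.ofReal (chi3Density y) :=
  rfl

instance : SFinite chi3 := by
  rw [chi3_eq_withDensity]
  infer_instance

theorem measurable_chi3Density : Measurable chi3Density :=
  Measurable.ite measurableSet_Ioi (by fun_prop) measurable_const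

theorem ae_pos_chi3 : ∀ᵐ y ∂chi3, 0 < y := by
  rw [chi3_eq_withDensity]
  refine (ae_withDensity_iff measurable_chi3Density.ennreal_ofReal).2 (ae_of_all _ fun y hy => ?_)
  by_contra hy0
  simp [chi3Density, if_neg hy0] at hy

theorem chi3Density_mul_inv_two_mul_pow (p : ℕ) {y : ℝ} (hy : 0 < y) :
    chi3Density y * ((2 * y) ^ p)⁻¹ =
      ((2 : ℝ) ^ ((p : ℝ) - 1) * Real.sqrt (2 * Real.pi))⁻¹ *
        (y ^ ((2 : ℝ) - (p : ℝ)) * Real.exp (-y ^ 2 / 2)) := by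
  have hsqrt : Real.sqrt (2 / Real.pi) * Real.sqrt (2 * Real.pi) = 2 := by
    rw [← Real.sqrt_mul (by positivity),
      show 2 / Real.pi * (2 * Real.pi) = 2 ^ 2 by field_simp, Real.sqrt_sq zero_le_two]
  rw [chi3Density, if_pos hy, Real.rpow_sub two_pos, Real.rpow_sub hy, Real.rpow_one,
    Real.rpow_two, Real.rpow_natCast, Real.rpow_natCast, mul_pow]
  field_simp
  linear_combination hsqrt

theorem integrableOn_Ioi_rpow_mul_exp_neg_sq_div_two {s r : ℝ} (hs : s ≤ 2) (hr : 0 < r) :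
    IntegrableOn (fun y => y ^ s * Real.exp (-y ^ 2 / 2)) (Ioi r) := by
  have hdom : IntegrableOn (fun y => r ^ (s - 2) * (y ^ (2 : ℝ) * Real.exp (-(1 / 2) * y ^ 2)))
      (Ioi r) :=
    ((integrable_rpow_mul_exp_neg_mul_sq (by norm_num) (by norm_num)).const_mul _).integrableOn
  refine hdom.mono' (by fun_prop) ((ae_restrict_iff' measurableSet_Ioi).2 (ae_of_all _ ?_))
  intro y (hy : r < y)
  have hy0 : 0 < y := hr.trans hy
  rw [Real.norm_of_nonneg (by positivity), show -(1 / 2) * y ^ 2 = -y ^ 2 / 2 by ring,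
    ← show y ^ (s - 2) * y ^ (2 : ℝ) = y ^ s by rw [← Real.rpow_add hy0]; ring_nf, mul_assoc]
  exact mul_le_mul_of_nonneg_right
    (Real.rpow_le_rpow_of_nonpos hr hy.le (by linarith : s - 2 ≤ 0)) (by positivity)

theorem lintegral_cubeDensity_chi3 (p : ℕ) {x : Fin p → ℝ} (hx : 0 < ‖x‖) :
    ∫⁻ y, cubeDensity p y x ∂chi3 = ENNReal.ofReal (khintchineDensity p x) := by
  set C := ((2 : ℝ) ^ ((p : ℝ) - 1) * Real.sqrt (2 * Real.pi))⁻¹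
  set K := fun y : ℝ => y ^ ((2 : ℝ) - (p : ℝ)) * Real.exp (-y ^ 2 / 2)
  have hK : ∀ y, ENNReal.ofReal (chi3Density y) * cubeDensity p y x =
      (Ici ‖x‖).indicator (fun y => ENNReal.ofReal (C * K y)) y := by
    intro y
    by_cases hxy : ‖x‖ ≤ y
    · rw [cubeDensity, if_pos hxy, indicator_of_mem (mem_Ici.2 hxy), ← ENNReal.ofReal_mul
        (by unfold chi3Density; split_ifs <;> positivity),
        chi3Density_mul_inv_two_mul_pow p (hx.trans_le hxy)]
    · rw [cubeDensity, if_neg hxy, indicator_of_notMem (mt mem_Ici.1 hxy), mul_zero]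
  have hKint : IntegrableOn K (Ioi ‖x‖) :=
    integrableOn_Ioi_rpow_mul_exp_neg_sq_div_two (by simp) hx
  rw [chi3_eq_withDensity, lintegral_withDensity_eq_lintegral_mul _
      measurable_chi3Density.ennreal_ofReal
      (show Measurable fun y => cubeDensity p y x from
        (measurable_cubeDensity p).comp (measurable_id.prodMk measurable_const))]
  simp only [Pi.mul_apply]
  rw [lintegral_congr hK, lintegral_indicator measurableSet_Ici,
    Measure.restrict_congr_set Ioi_ae_eq_Ici.symm,
    ← ofReal_integral_eq_lintegral_ofReal (hKint.const_mul C)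
      ((ae_restrict_iff' measurableSet_Ioi).2 (ae_of_all _ fun y (hy : ‖x‖ < y) => by
        have := hx.trans hy
        positivity)),
    integral_const_mul, khintchineDensity]

theorem ae_norm_pos {p : ℕ} (hp : 1 ≤ p) : ∀ᵐ x : Fin p → ℝ, 0 < ‖x‖ := by
  have : Nonempty (Fin p) := ⟨⟨0, hp⟩⟩
  exact (Measure.ae_ne volume 0).mono fun x hx => norm_pos_iff.2 hx

theorem khintchine_joint_density {Ω : Type*} [MeasureSpace Ω] (μ : Measure Ω)
    [IsProbabilityMeasure μ] (p : ℕ) (hp : 1 ≤ p)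
    (Y : Ω → ℝ) (U : Fin p → Ω → ℝ) (hY : Measurable Y) (hU : ∀ i, Measurable (U i))
    (hind : iIndepFun (Fin.cons Y U : Fin (p + 1) → Ω → ℝ) μ)
    (hYlaw : μ.map Y = chi3) (hUlaw : ∀ i, μ.map (U i) = unif) :
    μ.map (fun ω i => Y ω * U i ω) =
      volume.withDensity (fun x : Fin p → ℝ => ENNReal.ofReal (khintchineDensity p x)) := by
  have hjoint := map_prod_eq_prod_of_iIndepFun_cons hY hU hind
  simp only [hYlaw, hUlaw] at hjoint
  calc μ.map (fun ω i => Y ω * U i ω)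
      = (chi3.prod (Measure.pi fun _ => unif)).map fun z : ℝ × (Fin p → ℝ) => z.1 • z.2 := by
        rw [← hjoint, Measure.map_map (by fun_prop) (by fun_prop)]
        rfl
    _ = volume.withDensity fun x => ∫⁻ y, cubeDensity p y x ∂chi3 :=
        map_prod_eq_withDensity_lintegral (by fun_prop) (measurable_cubeDensity p)
          (ae_pos_chi3.mono fun y hy => map_smul_pi_unif p hy)
    _ = _ :=
        withDensity_congr_ae ((ae_norm_pos hp).mono fun x hx => lintegral_cubeDensity_chi3 p hx)
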